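/- Let β, x₁,…,x_d be independent indeterminates and work in the ring of formal power series over ℤ in these variables (where each 1+βx_i is invertible). Define the d×d matrix M̄ := ( (-1)^{d-i} ē_{d-i}^{(j)} )_{1≤i,j≤d}, where ē_p^{(j)} is the p-th elementary symmetric polynomial in the d-1 quantities x_i/(1+βx_i) for 1 ≤ i ≤ d, i ≠ j. Then det M̄ = ∏_{1≤i≤d} (1+βx_i)^{1-d} · ∏_{1≤i<j≤d} (x_i - x_j). -/

import Mathlib

open scoped BigOperators

namespace GrothDet

/-- Index type for the indeterminates: `β`, `x₁,…,x_d`, `b₁,b₂,…`. -/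
abbrev Idx (d : ℕ) := Unit ⊕ Fin d ⊕ ℕ

/-- The ambient ring: formal power series over `ℤ` in `β`, the `xᵢ` and the `bⱼ`. -/
abbrev R (d : ℕ) := MvPowerSeries (Idx d) ℤ

noncomputable def β (d : ℕ) : R d := MvPowerSeries.X (Sum.inl ())
noncomputable def x (d : ℕ) (i : Fin d) : R d := MvPowerSeries.X (Sum.inr (Sum.inl i))
noncomputable def b (d : ℕ) (ℓ : ℕ) : R d := MvPowerSeries.X (Sum.inr (Sum.inr ℓ))

/-- `x ⊕ y := x + y + βxy`. -/
noncomputable def oplus (d : ℕ) (u v : R d) : R d := u + v + β d * u * v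

/-- `[y|b]^k := (y ⊕ b₁)⋯(y ⊕ b_k)`. -/
noncomputable def fb (d : ℕ) (y : R d) (k : ℕ) : R d :=
  ∏ ℓ ∈ Finset.range k, oplus d y (b d ℓ)

/-- The multiplicative inverse of `1 + β * x j` (a unit since its constant term is `1`). -/
noncomputable def invOneAdd (d : ℕ) (j : Fin d) : R d :=
  MvPowerSeries.invOfUnit (1 + β d * x d j) 1

/-- `F^{(k)}(u) = ∏ᵢ (1+βxᵢ)/(1-xᵢu) · ∏_{ℓ=1}^k (1+(u+β)b_ℓ)` as a power series in `u`
over `R d`; here `(1-xᵢu)⁻¹ = ∑_n xᵢⁿ uⁿ`. -/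
noncomputable def F (d : ℕ) (k : ℕ) : PowerSeries (R d) :=
  (∏ i : Fin d,
      PowerSeries.C (1 + β d * x d i) * PowerSeries.mk fun n => x d i ^ n) *
    ∏ ℓ ∈ Finset.range k,
      (1 + (PowerSeries.X + PowerSeries.C (β d)) * PowerSeries.C (b d ℓ))

/-- `[u^t] F^{(k)}(u)`, extended by `0` in negative degrees `t`. -/
noncomputable def Fcoeff (d : ℕ) (k : ℕ) (t : ℤ) : R d :=
  if 0 ≤ t then PowerSeries.coeff t.toNat (F d k) else 0

/-- The sum `∑_{s≥0} f s` of a family of power series such that `β^s ∣ f s`: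
it is defined coefficientwise; on the coefficient of a monomial `n` only the
(finitely many) terms with `s ≤ n(β)` contribute, and the value is the limit of the
partial sums in the formal power series topology. -/
noncomputable def seriesSum (d : ℕ) (f : ℕ → R d) : R d :=
  (fun n => ∑ s ∈ Finset.range (n (Sum.inl ()) + 1), MvPowerSeries.coeff n (f s) :
    (Idx d →₀ ℕ) → ℤ)

/-- `G^{(k)}_m = ∑_{s≥0} (-β)^s [u^{m+s}] F^{(k)}(u)`. -/
noncomputable def G (d : ℕ) (k : ℕ) (m : ℤ) : R d :=
  seriesSum d fun s => (-β d) ^ s * Fcoeff d k (m + s)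

/-- The `p`-th elementary symmetric function of the family `f` restricted to `S`. -/
noncomputable def esym (d : ℕ) (S : Finset (Fin d)) (p : ℕ) (f : Fin d → R d) : R d :=
  ∑ t ∈ S.powersetCard p, ∏ i ∈ t, f i

/-- `x_i/(1+βx_i) = -x̄_i`. -/
noncomputable def xbar (d : ℕ) (i : Fin d) : R d := x d i * invOneAdd d i



end GrothDet

/-!
By Vieta, column `j` of `M̄` lists the coefficients of `∏_{m ≠ j} (X - v m)` with
`v i = xᵢ/(1+βxᵢ)`, so multiplying by the Vandermonde matrix `V(v)` evaluates these polynomials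
at the nodes: `V(v) · M̄ = diag (∏_{m ≠ j} (v j - v m))`. Taking determinants,
`det V · det M̄ = det V · ∏_{i<j} (v i - v j)`. For independent indeterminates `det V` is nonzero
in a domain and can be cancelled; the identity then specialises to any values. Finally
`v i - v j = (xᵢ - xⱼ) / ((1+βxᵢ)(1+βxⱼ))`, and each `i` occurs in `d - 1` of the pairs.
-/

open Finset Polynomial Lagrange

section NodalCoeffs

variable {A : Type*} [CommRing A]

theorem coeff_nodal {ι : Type*} (s : Finset ι) (v : ι → A) {k : ℕ} (hk : k ≤ #s) :
    (nodal s v).coeff k = (-1) ^ (#s - k) * (s.val.map v).esymm (#s - k) := by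
  have hnodal : nodal s v = ((s.val.map v).map fun t => X - C t).prod := by
    rw [nodal_eq, prod_eq_multiset_prod, Multiset.map_map]
    rfl
  rw [hnodal, Multiset.prod_X_sub_C_coeff _ (by simpa using hk), Multiset.card_map, card_val]

variable {d : ℕ}

noncomputable def nodalCoeffMatrix (v : Fin d → A) : Matrix (Fin d) (Fin d) A :=
  Matrix.of fun i j => (nodal (univ \ {j}) v).coeff i

theorem vandermonde_mul_nodalCoeffMatrix (v : Fin d → A) :
    Matrix.vandermonde v * nodalCoeffMatrix v
      = Matrix.diagonal fun j => (nodal (univ \ {j}) v).eval (v j) := by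
  nontriviality A
  ext i j
  have hdeg : (nodal (univ \ {j}) v).natDegree < d := by
    rw [natDegree_nodal, card_univ_sdiff, Fintype.card_fin, card_singleton]
    exact Nat.sub_lt i.pos one_pos
  calc (Matrix.vandermonde v * nodalCoeffMatrix v) i j
      = ∑ k ∈ range d, (nodal (univ \ {j}) v).coeff k * v i ^ k := by
        rw [Matrix.mul_apply, ← Fin.sum_univ_eq_sum_range]
        exact sum_congr rfl fun k _ => mul_comm _ _
    _ = (nodal (univ \ {j}) v).eval (v i) := (eval_eq_sum_range' hdeg _).symm
    _ = _ := by
        rcases eq_or_ne i j with rfl | hij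
        · simp
        · rw [Matrix.diagonal_apply_ne _ hij]
          exact eval_nodal_at_node (by simp [hij])

theorem prod_eval_nodal_compl (v : Fin d → A) :
    ∏ j, (nodal (univ \ {j}) v).eval (v j)
      = (Matrix.vandermonde v).det * ∏ i, ∏ j ∈ Ioi i, (v i - v j) := by
  simp_rw [eval_nodal, ← compl_eq_univ_sdiff, ← Ioi_disjUnion_Iio, prod_disjUnion,
    prod_mul_distrib, Matrix.det_vandermonde]
  rw [mul_comm]
  congr 1
  exact prod_comm' fun i j => by simp [and_comm]

theorem det_nodalCoeffMatrix_of_injective [IsDomain A] {v : Fin d → A}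
    (hv : Function.Injective v) :
    (nodalCoeffMatrix v).det = ∏ i, ∏ j ∈ Ioi i, (v i - v j) := by
  refine mul_left_cancel₀ (Matrix.det_vandermonde_ne_zero_iff.mpr hv) ?_
  rw [← Matrix.det_mul, vandermonde_mul_nodalCoeffMatrix, Matrix.det_diagonal,
    prod_eval_nodal_compl]

theorem nodalCoeffMatrix_map {B : Type*} [CommRing B] (f : A →+* B) (v : Fin d → A) :
    (nodalCoeffMatrix v).map f = nodalCoeffMatrix (f ∘ v) := by
  ext i j
  simp only [nodalCoeffMatrix, Matrix.map_apply, Matrix.of_apply]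
  rw [← coeff_map]
  simp [nodal_eq, Polynomial.map_prod]

theorem det_nodalCoeffMatrix (v : Fin d → A) :
    (nodalCoeffMatrix v).det = ∏ i, ∏ j ∈ Ioi i, (v i - v j) := by
  have hgeneric := congrArg (MvPolynomial.eval₂Hom (Int.castRingHom A) v)
    (det_nodalCoeffMatrix_of_injective (MvPolynomial.X_injective (σ := Fin d) (R := ℤ)))
  rw [RingHom.map_det, RingHom.mapMatrix_apply, nodalCoeffMatrix_map] at hgeneric
  simpa [Function.comp_def] using hgeneric

end NodalCoeffs

theorem prod_prod_Ioi_mul_eq_prod_pow {M : Type*} [CommMonoid M] {d : ℕ} (f : Fin d → M) :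
    ∏ i, ∏ j ∈ Ioi i, (f i * f j) = ∏ i, f i ^ (d - 1) := by
  have hswap : ∏ i, ∏ j ∈ Ioi i, f j = ∏ j, ∏ _i ∈ Iio j, f j :=
    prod_comm' fun i j => by simp
  simp_rw [prod_mul_distrib, hswap, prod_const, ← prod_mul_distrib, ← pow_add, Fin.card_Ioi,
    Fin.card_Iio]
  exact prod_congr rfl fun i _ => congrArg _ (by omega)

namespace GrothDet

theorem one_add_mul_invOneAdd (d : ℕ) (i : Fin d) : (1 + β d * x d i) * invOneAdd d i = 1 :=
  MvPowerSeries.mul_invOfUnit _ 1 (by simp [β, x])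

theorem xbar_sub (d : ℕ) (i j : Fin d) :
    xbar d i - xbar d j = invOneAdd d i * invOneAdd d j * (x d i - x d j) := by
  rw [xbar, xbar]
  linear_combination (x d j * invOneAdd d j) * one_add_mul_invOneAdd d i
    - (x d i * invOneAdd d i) * one_add_mul_invOneAdd d j

/-- `det M̄ = ∏_i (1+βx_i)^{1-d} · ∏_{i<j} (x_i - x_j)`. -/
theorem det_Mbar
    (d : ℕ) :
    Matrix.det (Matrix.of fun i j : Fin d =>
        (-1 : R d) ^ (d - 1 - (i : ℕ)) *
          esym d (Finset.univ \ {j}) (d - 1 - (i : ℕ)) (xbar d))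
      = (∏ i : Fin d, invOneAdd d i ^ (d - 1)) *
          ∏ i : Fin d, ∏ j ∈ Finset.Ioi i, (x d i - x d j) := by
  have hMbar : (Matrix.of fun i j : Fin d =>
      (-1 : R d) ^ (d - 1 - (i : ℕ)) * esym d (univ \ {j}) (d - 1 - (i : ℕ)) (xbar d))
        = nodalCoeffMatrix (xbar d) := by
    ext i j
    have hcard : #(univ \ {j}) = d - 1 := by
      rw [card_univ_sdiff, Fintype.card_fin, card_singleton]
    rw [nodalCoeffMatrix, Matrix.of_apply, Matrix.of_apply, coeff_nodal _ _ (by omega), hcard,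
      esym, esymm_map_val]
  rw [hMbar, det_nodalCoeffMatrix]
  simp_rw [xbar_sub, ← prod_prod_Ioi_mul_eq_prod_pow (invOneAdd d), ← prod_mul_distrib]

end GrothDet
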